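/- Let f : Σ → ℝ³ be an immersion with unit normal ν, mean curvature H and Gauss curvature K, and let Y = H·X + N be its conformal Gauss map into Q⁴ ⊂ ℝ^{4,1}. Then ⟨∇ᵢY, ∇ⱼY⟩ = (H² − K)⟨∇ᵢf, ∇ⱼf⟩ for all tangent directions i, j; in particular Y is conformal away from umbilic points and the area of Y (with the induced possibly degenerate metric) equals ∫_Σ (H² − K) dμ_g. -/

import Mathlib

/-- Real partial derivative of `F : ℂ → ℝ` in coordinate direction `i` (`∂_x` for
`i = 0`, `∂_y` for `i = 1`). -/
noncomputable def pderiv2 (F : ℂ → ℝ) (i : Fin 2) (z : ℂ) : ℝ :=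
  fderiv ℝ F z (if i = 0 then 1 else Complex.I)

/-- Euclidean product on ℝ³. -/
noncomputable def dot3R (a b : Fin 3 → ℝ) : ℝ := ∑ i, a i * b i

/-- Lorentzian product on ℝ⁵ = ℝ^{4,1}. -/
noncomputable def ldot5R (a b : Fin 5 → ℝ) : ℝ :=
  a 0 * b 0 + a 1 * b 1 + a 2 * b 2 + a 3 * b 3 - a 4 * b 4

lemma pd_add {F G : ℂ → ℝ} {z : ℂ} (hF : DifferentiableAt ℝ F z)
    (hG : DifferentiableAt ℝ G z) (i : Fin 2) :
    pderiv2 (fun w => F w + G w) i z = pderiv2 F i z + pderiv2 G i z := by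
  unfold pderiv2; rw [fderiv_fun_add hF hG]; simp

lemma pd_sub {F G : ℂ → ℝ} {z : ℂ} (hF : DifferentiableAt ℝ F z)
    (hG : DifferentiableAt ℝ G z) (i : Fin 2) :
    pderiv2 (fun w => F w - G w) i z = pderiv2 F i z - pderiv2 G i z := by
  unfold pderiv2; rw [fderiv_fun_sub hF hG]; simp

lemma pd_mul {F G : ℂ → ℝ} {z : ℂ} (hF : DifferentiableAt ℝ F z)
    (hG : DifferentiableAt ℝ G z) (i : Fin 2) :
    pderiv2 (fun w => F w * G w) i z = pderiv2 F i z * G z + F z * pderiv2 G i z := by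
  unfold pderiv2; rw [fderiv_fun_mul hF hG]; simp; ring

lemma pd_const (c : ℝ) (z : ℂ) (i : Fin 2) : pderiv2 (fun _ => c) i z = 0 := by
  unfold pderiv2; rw [fderiv_const_apply]; simp

lemma pd_div_const {F : ℂ → ℝ} {z : ℂ} (hF : DifferentiableAt ℝ F z) (c : ℝ) (i : Fin 2) :
    pderiv2 (fun w => F w / c) i z = pderiv2 F i z / c := by
  unfold pderiv2
  simp only [div_eq_mul_inv]
  rw [fderiv_mul_const hF]
  simp [mul_comm]

lemma pd_eqOn_const {F : ℂ → ℝ} {U : Set ℂ} (hU : IsOpen U) {c : ℝ}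
    (h : ∀ w ∈ U, F w = c) {z : ℂ} (hz : z ∈ U) (i : Fin 2) : pderiv2 F i z = 0 := by
  have he : F =ᶠ[nhds z] fun _ => c := Filter.eventuallyEq_of_mem (hU.mem_nhds hz) h
  unfold pderiv2
  rw [he.fderiv_eq, fderiv_const_apply]
  simp

lemma pd_diff {F : ℂ → ℝ} (hF : ContDiff ℝ (⊤ : ℕ∞) F) (j : Fin 2) :
    Differentiable ℝ (fun w => pderiv2 F j w) := by
  unfold pderiv2
  have hF' : ContDiff ℝ (⊤ : ℕ∞) F := hF.of_le (by simp)
  have hd : Differentiable ℝ (fderiv ℝ F) :=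
    ((contDiff_infty_iff_fderiv.mp hF').2).differentiable (by simp)
  exact hd.clm_apply (differentiable_const _)

lemma pd_symm {F : ℂ → ℝ} (hF : ContDiff ℝ (⊤ : ℕ∞) F) (z : ℂ) (i j : Fin 2) :
    pderiv2 (fun w => pderiv2 F j w) i z = pderiv2 (fun w => pderiv2 F i w) j z := by
  have hsym : IsSymmSndFDerivAt ℝ F z := hF.contDiffAt.isSymmSndFDerivAt (by
    simp only [minSmoothness_of_isRCLikeNormedField]; exact (WithTop.coe_le_coe.mpr (le_top : (2 : ℕ∞) ≤ ⊤) :))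
  have hF' : ContDiff ℝ (⊤ : ℕ∞) F := hF.of_le (by simp)
  have hd : Differentiable ℝ (fderiv ℝ F) :=
    ((contDiff_infty_iff_fderiv.mp hF').2).differentiable (by simp)
  have key : ∀ (u v : ℂ), fderiv ℝ (fun w => fderiv ℝ F w v) z u
      = fderiv ℝ (fderiv ℝ F) z u v := by
    intro u v
    rw [fderiv_clm_apply (hd z) (differentiableAt_const v)]
    simp
  unfold pderiv2
  rw [key, key]
  exact hsym _ _

lemma parseval3 (e : Fin 3 → Fin 3 → ℝ)
    (h : ∀ a b, dot3R (e a) (e b) = if a = b then 1 else 0)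
    (v w : Fin 3 → ℝ) : dot3R v w = ∑ a, dot3R v (e a) * dot3R w (e a) := by
  have key : ∀ k l, (∑ a, e a k * e a l) = if k = l then (1:ℝ) else 0 := by
    let A : Matrix (Fin 3) (Fin 3) ℝ := Matrix.of e
    have hA : A * A.transpose = 1 := by
      ext a b
      have := h a b
      simp only [dot3R] at this
      simp [Matrix.mul_apply, Matrix.transpose_apply, A, Matrix.one_apply, this]
    have hA' : A.transpose * A = 1 := mul_eq_one_comm.mp hA
    intro k l
    have h2 := congrFun (congrFun hA' k) l
    simp only [Matrix.mul_apply, Matrix.transpose_apply, Matrix.one_apply, A,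
      Matrix.of_apply] at h2
    simpa using h2
  have k00 := key 0 0; have k01 := key 0 1; have k02 := key 0 2
  have k11 := key 1 1; have k12 := key 1 2; have k22 := key 2 2
  simp only [Fin.sum_univ_three, if_true, if_pos, if_neg, Fin.ext_iff] at k00 k01 k02 k11 k12 k22 ⊢
  norm_num at k00 k01 k02 k11 k12 k22
  simp only [dot3R, Fin.sum_univ_three]
  linear_combination -(v 0 * w 0) * k00 - (v 0 * w 1 + v 1 * w 0) * k01 - (v 0 * w 2 + v 2 * w 0) * k02 - v 1 * w 1 * k11 - (v 1 * w 2 + v 2 * w 1) * k12 - v 2 * w 2 * k22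

lemma dot3R_smul_left (c : ℝ) (v w : Fin 3 → ℝ) :
    dot3R (fun k => c * v k) w = c * dot3R v w := by
  simp [dot3R, Finset.mul_sum, mul_assoc]

lemma dot3R_smul_right (c : ℝ) (v w : Fin 3 → ℝ) :
    dot3R v (fun k => c * w k) = c * dot3R v w := by
  unfold dot3R
  rw [Finset.mul_sum]
  exact Finset.sum_congr rfl (fun i _ => by ring)

lemma dot3R_comm (v w : Fin 3 → ℝ) : dot3R v w = dot3R w v := by
  simp [dot3R, mul_comm]

/-- For an immersion `f : Σ → ℝ³` (in a conformal coordinate, with metric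
`e^λ δᵢⱼ`), unit normal `ν`, mean curvature `H`, Gauss curvature `K` and conformal
Gauss map `Y = H·X + N` into `Q⁴ ⊂ ℝ^{4,1}`, one has
`⟨∇ᵢY, ∇ⱼY⟩ = (H² − K)⟨∇ᵢf, ∇ⱼf⟩`; in particular the induced area element of `Y`
equals `(H² − K) e^λ`, so the area of `Y` is `∫ (H² − K) dμ_g`. -/
theorem stmt_11 (U : Set ℂ) (hU : IsOpen U)
    (f ν : ℂ → Fin 3 → ℝ) (lam H K : ℂ → ℝ)
    (hfsm : ∀ i, ContDiff ℝ (⊤ : ℕ∞) (fun z => f z i))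
    (hνsm : ∀ i, ContDiff ℝ (⊤ : ℕ∞) (fun z => ν z i))
    (hHsm : ContDiff ℝ (⊤ : ℕ∞) H) (hlamsm : ContDiff ℝ (⊤ : ℕ∞) lam)
    -- conformal immersion with metric e^λ δᵢⱼ
    (hconf : ∀ z ∈ U, ∀ i j : Fin 2,
      dot3R (fun k => pderiv2 (fun w => f w k) i z) (fun k => pderiv2 (fun w => f w k) j z)
        = if i = j then Real.exp (lam z) else 0)
    -- ν is the unit normal
    (hνunit : ∀ z ∈ U, dot3R (ν z) (ν z) = 1)
    (hνperp : ∀ z ∈ U, ∀ i : Fin 2,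
      dot3R (fun k => pderiv2 (fun w => f w k) i z) (ν z) = 0)
    -- second fundamental form hᵢⱼ = −⟨∂ᵢν, ∂ⱼf⟩
    (h2 : ℂ → Fin 2 → Fin 2 → ℝ)
    (hh : ∀ z ∈ U, ∀ i j : Fin 2, h2 z i j =
      -(dot3R (fun k => pderiv2 (fun w => ν w k) i z) (fun k => pderiv2 (fun w => f w k) j z)))
    -- H = (κ₁+κ₂)/2 and K = κ₁κ₂ in terms of hᵢⱼ and the metric
    (hHdef : ∀ z ∈ U, H z = (h2 z 0 0 + h2 z 1 1) / (2 * Real.exp (lam z)))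
    (hKdef : ∀ z ∈ U, K z =
      (h2 z 0 0 * h2 z 1 1 - h2 z 0 1 * h2 z 1 0) / Real.exp (lam z) ^ 2)
    -- the conformal Gauss map Y = H·X + N
    (X N Y : ℂ → Fin 5 → ℝ)
    (hX : ∀ z, X z = ![f z 0, f z 1, f z 2,
      (dot3R (f z) (f z) - 1) / 2, (dot3R (f z) (f z) + 1) / 2])
    (hN : ∀ z, N z = ![ν z 0, ν z 1, ν z 2, dot3R (f z) (ν z), dot3R (f z) (ν z)])
    (hY : ∀ z i, Y z i = H z * X z i + N z i) :
    ∀ z ∈ U,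
      (∀ i j : Fin 2,
        ldot5R (fun a => pderiv2 (fun w => Y w a) i z) (fun a => pderiv2 (fun w => Y w a) j z)
          = (H z ^ 2 - K z) *
            dot3R (fun k => pderiv2 (fun w => f w k) i z)
              (fun k => pderiv2 (fun w => f w k) j z)) ∧
      Real.sqrt
        (ldot5R (fun a => pderiv2 (fun w => Y w a) 0 z) (fun a => pderiv2 (fun w => Y w a) 0 z) *
         ldot5R (fun a => pderiv2 (fun w => Y w a) 1 z) (fun a => pderiv2 (fun w => Y w a) 1 z) -
         ldot5R (fun a => pderiv2 (fun w => Y w a) 0 z) (fun a => pderiv2 (fun w => Y w a) 1 z) ^ 2)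
        = (H z ^ 2 - K z) * Real.exp (lam z) := by
  have hfd : ∀ k, Differentiable ℝ (fun w => f w k) := fun k => (hfsm k).differentiable (by simp)
  have hνd : ∀ k, Differentiable ℝ (fun w => ν w k) := fun k => (hνsm k).differentiable (by simp)
  have hHd : Differentiable ℝ H := hHsm.differentiable (by simp)
  have hpdiff : ∀ (k : Fin 3) (j : Fin 2),
      Differentiable ℝ (fun w => pderiv2 (fun u => f u k) j w) :=
    fun k j => pd_diff (hfsm k) j
  intro z hz
  set s := Real.exp (lam z) with hs_def
  have hs : 0 < s := Real.exp_pos _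
  -- component functions of Y
  have e0 : (fun w => Y w (0 : Fin 5)) = fun w => H w * f w 0 + ν w 0 := by
    funext w; rw [hY, hX, hN]; simp
  have e1 : (fun w => Y w (1 : Fin 5)) = fun w => H w * f w 1 + ν w 1 := by
    funext w; rw [hY, hX, hN]; simp
  have e2 : (fun w => Y w (2 : Fin 5)) = fun w => H w * f w 2 + ν w 2 := by
    funext w; rw [hY, hX, hN]; simp
  have e3 : (fun w => Y w (3 : Fin 5)) = fun w =>
      H w * ((f w 0 * f w 0 + f w 1 * f w 1 + f w 2 * f w 2 - 1) / 2)
        + (f w 0 * ν w 0 + f w 1 * ν w 1 + f w 2 * ν w 2) := by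
    funext w; rw [hY, hX, hN]; simp [dot3R, Fin.sum_univ_three]
  have e4 : (fun w => Y w (4 : Fin 5)) = fun w =>
      H w * ((f w 0 * f w 0 + f w 1 * f w 1 + f w 2 * f w 2 + 1) / 2)
        + (f w 0 * ν w 0 + f w 1 * ν w 1 + f w 2 * ν w 2) := by
    funext w; rw [hY, hX, hN]; simp [dot3R, Fin.sum_univ_three]
  -- normal derivative is orthogonal to ν
  have c_mν : ∀ i : Fin 2,
      dot3R (fun k => pderiv2 (fun w => ν w k) i z) (ν z) = 0 := by
    intro i
    have key : pderiv2 (fun w => ν w 0 * ν w 0 + ν w 1 * ν w 1 + ν w 2 * ν w 2) i z = 0 :=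
      pd_eqOn_const hU (fun w hw => by
        have := hνunit w hw; simpa [dot3R, Fin.sum_univ_three] using this) hz i
    simp (disch := fun_prop) only [pd_add, pd_mul] at key
    simp only [dot3R, Fin.sum_univ_three]
    linarith
  -- symmetry of the second fundamental form
  have hsymm : h2 z 0 1 = h2 z 1 0 := by
    have hperp2 : ∀ i j : Fin 2,
        pderiv2 (fun w => pderiv2 (fun u => f u 0) j w) i z * ν z 0
          + pderiv2 (fun w => pderiv2 (fun u => f u 1) j w) i z * ν z 1
          + pderiv2 (fun w => pderiv2 (fun u => f u 2) j w) i z * ν z 2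
          = h2 z i j := by
      intro i j
      have key : pderiv2 (fun w => pderiv2 (fun u => f u 0) j w * ν w 0
          + pderiv2 (fun u => f u 1) j w * ν w 1
          + pderiv2 (fun u => f u 2) j w * ν w 2) i z = 0 :=
        pd_eqOn_const hU (fun w hw => by
          have := hνperp w hw j; simpa [dot3R, Fin.sum_univ_three] using this) hz i
      simp (disch := fun_prop) only [pd_add, pd_mul] at key
      have hb := hh z hz i j
      simp only [dot3R, Fin.sum_univ_three] at hb
      linarith
    have h01 := hperp2 0 1
    have h10 := hperp2 1 0
    rw [pd_symm (hfsm 0) z 1 0, pd_symm (hfsm 1) z 1 0, pd_symm (hfsm 2) z 1 0] at h10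
    linarith
  -- ⟨∂ᵢν, ∂ⱼν⟩ via the orthonormal frame
  set r := Real.exp (-(lam z) / 2) with hr_def
  have hr2 : r * r = s⁻¹ := by
    rw [hr_def, hs_def, ← Real.exp_add, ← Real.exp_neg]
    norm_num
  have c_mn : ∀ i j : Fin 2,
      dot3R (fun k => pderiv2 (fun w => ν w k) i z) (fun k => pderiv2 (fun w => ν w k) j z)
        = s⁻¹ * (h2 z i 0 * h2 z j 0 + h2 z i 1 * h2 z j 1) := by
    intro i j
    set e : Fin 3 → Fin 3 → ℝ :=
      ![fun k => r * pderiv2 (fun w => f w k) 0 z,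
        fun k => r * pderiv2 (fun w => f w k) 1 z, ν z] with he_def
    have hrs : r * (r * s) = 1 := by
      have : r * (r * s) = (r * r) * s := by ring
      rw [this, hr2, inv_mul_cancel₀ hs.ne']
    have o00 : dot3R (fun k => r * pderiv2 (fun w => f w k) 0 z)
        (fun k => r * pderiv2 (fun w => f w k) 0 z) = 1 := by
      rw [dot3R_smul_left, dot3R_smul_right, hconf z hz 0 0, if_pos rfl]; exact hrs
    have o11 : dot3R (fun k => r * pderiv2 (fun w => f w k) 1 z)
        (fun k => r * pderiv2 (fun w => f w k) 1 z) = 1 := by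
      rw [dot3R_smul_left, dot3R_smul_right, hconf z hz 1 1, if_pos rfl]; exact hrs
    have o01 : dot3R (fun k => r * pderiv2 (fun w => f w k) 0 z)
        (fun k => r * pderiv2 (fun w => f w k) 1 z) = 0 := by
      rw [dot3R_smul_left, dot3R_smul_right, hconf z hz 0 1]; norm_num
    have o10 : dot3R (fun k => r * pderiv2 (fun w => f w k) 1 z)
        (fun k => r * pderiv2 (fun w => f w k) 0 z) = 0 := by
      rw [dot3R_smul_left, dot3R_smul_right, hconf z hz 1 0]; norm_num
    have o0ν : dot3R (fun k => r * pderiv2 (fun w => f w k) 0 z) (ν z) = 0 := by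
      rw [dot3R_smul_left, hνperp z hz 0]; ring
    have o1ν : dot3R (fun k => r * pderiv2 (fun w => f w k) 1 z) (ν z) = 0 := by
      rw [dot3R_smul_left, hνperp z hz 1]; ring
    have oν0 : dot3R (ν z) (fun k => r * pderiv2 (fun w => f w k) 0 z) = 0 := by
      rw [dot3R_comm]; exact o0ν
    have oν1 : dot3R (ν z) (fun k => r * pderiv2 (fun w => f w k) 1 z) = 0 := by
      rw [dot3R_comm]; exact o1ν
    have horth : ∀ a b, dot3R (e a) (e b) = if a = b then 1 else 0 := by
      intro a b
      fin_cases a <;> fin_cases b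
      · simpa [he_def] using o00
      · simpa [he_def] using o01
      · simpa [he_def] using o0ν
      · simpa [he_def] using o10
      · simpa [he_def] using o11
      · simpa [he_def] using o1ν
      · simpa [he_def] using oν0
      · simpa [he_def] using oν1
      · simpa [he_def] using hνunit z hz
    have hpars := parseval3 e horth (fun k => pderiv2 (fun w => ν w k) i z)
      (fun k => pderiv2 (fun w => ν w k) j z)
    simp only [Fin.sum_univ_three, he_def, Matrix.cons_val_zero, Matrix.cons_val_one,
      Matrix.head_cons, Matrix.cons_val_two, Matrix.tail_cons] at hpars
    rw [dot3R_smul_right, dot3R_smul_right, dot3R_smul_right, dot3R_smul_right,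
      c_mν i, c_mν j] at hpars
    have hmu0 : dot3R (fun k => pderiv2 (fun w => ν w k) i z)
        (fun k => pderiv2 (fun w => f w k) 0 z) = -h2 z i 0 := by rw [hh z hz i 0]; ring
    have hmu1 : dot3R (fun k => pderiv2 (fun w => ν w k) i z)
        (fun k => pderiv2 (fun w => f w k) 1 z) = -h2 z i 1 := by rw [hh z hz i 1]; ring
    have hnu0 : dot3R (fun k => pderiv2 (fun w => ν w k) j z)
        (fun k => pderiv2 (fun w => f w k) 0 z) = -h2 z j 0 := by rw [hh z hz j 0]; ring
    have hnu1 : dot3R (fun k => pderiv2 (fun w => ν w k) j z)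
        (fun k => pderiv2 (fun w => f w k) 1 z) = -h2 z j 1 := by rw [hh z hz j 1]; ring
    rw [hmu0, hmu1, hnu0, hnu1] at hpars
    rw [hpars]
    linear_combination (h2 z i 0 * h2 z j 0 + h2 z i 1 * h2 z j 1) * hr2
  -- the main pointwise identity
  have main : ∀ i j : Fin 2,
      ldot5R (fun a => pderiv2 (fun w => Y w a) i z) (fun a => pderiv2 (fun w => Y w a) j z)
        = H z ^ 2 * (if i = j then s else 0) - H z * (h2 z i j + h2 z j i)
          + s⁻¹ * (h2 z i 0 * h2 z j 0 + h2 z i 1 * h2 z j 1) := by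
    intro i j
    have c_uw := hconf z hz i j
    have c_uν := hνperp z hz i
    have c_wν := hνperp z hz j
    have c_mw := hh z hz i j
    have c_nu := hh z hz j i
    have c_mn' := c_mn i j
    simp only [dot3R, Fin.sum_univ_three] at c_uw c_uν c_wν c_mw c_nu c_mn'
    simp only [ldot5R]
    rw [e0, e1, e2, e3, e4]
    simp (disch := fun_prop) only [pd_add, pd_mul, pd_sub, pd_div_const, pd_const]
    linear_combination (H z ^ 2) * c_uw - pderiv2 H i z * c_wν - pderiv2 H j z * c_uν
      + H z * c_mw + H z * c_nu + c_mn'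
  -- first conjunct
  have part1 : ∀ i j : Fin 2,
      ldot5R (fun a => pderiv2 (fun w => Y w a) i z) (fun a => pderiv2 (fun w => Y w a) j z)
        = (H z ^ 2 - K z) * dot3R (fun k => pderiv2 (fun w => f w k) i z)
            (fun k => pderiv2 (fun w => f w k) j z) := by
    intro i j
    rw [main i j, hconf z hz i j]
    have hH' := hHdef z hz
    have hK' := hKdef z hz
    rw [← hs_def] at hH' hK'
    fin_cases i <;> fin_cases j <;>
      simp only [Fin.zero_eta, Fin.mk_one] <;>
      rw [hH', hK'] <;> norm_num <;> field_simp
    · rw [hsymm]; ring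
    · first
        | linear_combination ((h2 z 1 1 - h2 z 0 0) * s) * hsymm
        | linear_combination ((h2 z 0 0 - h2 z 1 1) * s) * hsymm
        | linear_combination (2 * (h2 z 1 1 - h2 z 0 0) * s) * hsymm
        | linear_combination (2 * (h2 z 0 0 - h2 z 1 1) * s) * hsymm
        | (rw [hsymm]; ring)
    · first
        | linear_combination ((h2 z 1 1 - h2 z 0 0) * s) * hsymm
        | linear_combination ((h2 z 0 0 - h2 z 1 1) * s) * hsymm
        | linear_combination (2 * (h2 z 1 1 - h2 z 0 0) * s) * hsymm
        | linear_combination (2 * (h2 z 0 0 - h2 z 1 1) * s) * hsymm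
        | (rw [hsymm]; ring)
    · rw [hsymm]; ring
  refine ⟨part1, ?_⟩
  -- second conjunct
  have hpos : 0 ≤ H z ^ 2 - K z := by
    have hH' := hHdef z hz
    have hK' := hKdef z hz
    rw [← hs_def] at hH' hK'
    have key : H z ^ 2 - K z
        = ((h2 z 0 0 - h2 z 1 1) ^ 2 + 4 * h2 z 0 1 ^ 2) / (4 * s ^ 2) := by
      rw [hH', hK', ← hsymm]
      field_simp
      ring
    rw [key]
    positivity
  have E00 := part1 0 0
  have E11 := part1 1 1
  have E01 := part1 0 1
  rw [hconf z hz 0 0] at E00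
  rw [hconf z hz 1 1] at E11
  rw [hconf z hz 0 1] at E01
  norm_num at E00 E11 E01
  rw [← hs_def] at E00 E11
  rw [E00, E11, E01]
  rw [show (H z ^ 2 - K z) * s * ((H z ^ 2 - K z) * s) - 0 ^ 2
      = ((H z ^ 2 - K z) * s) ^ 2 from by ring, Real.sqrt_sq (by positivity)]
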